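/- arXiv:2112.11927 — 3 statements merged into one kernel-verified Lean document; each statement's English description precedes it below -/
import Mathlib

section
/- Let D ≥ 0 and ε > 0 be real numbers, and let γ be a real number with 1 < γ ≤ 1/ε. Let L be a finite index set and, for each e ∈ L, let d_e be a real number with D + γ·ε − 1 ≤ d_e ≤ D. Let (X_e)_{e ∈ L} be an independent family of real random variables on a common probability space, where X_e has the uniform distribution on the interval [D, d_e + 1]. Let n ≥ 1 be a natural number and assume (1 − 1/γ)·|L| ≥ 8·ln n. Then the probability that the number of indices e ∈ L with X_e ≥ D + ε is at least (1/2)·(1 − 1/γ)·|L| is at least 1 − 1/n. -/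
/-!
Each `X_e` lands in `[D + ε, d_e + 1]` with probability `1 - ε / (d_e + 1 - D) ≥ q := 1 - 1/γ`,
because `[D, d_e + 1]` has length at least `γ ε`. The number of such `e` is a sum of independent
indicators with mean at least `q |L|`; the Chernoff bound at `t = -log 2` shows that it drops to
`q |L| / 2` with probability at most `exp ((log 2 - 1) q |L| / 2) ≤ exp (-q |L| / 8) ≤ 1/n`.
-/

open MeasureTheory ProbabilityTheory

/-- The uniform (normalized Lebesgue) probability law on the interval `[a, b]`. -/
noncomputable def uniformLaw (a b : ℝ) : Measure ℝ :=
  (volume (Set.Icc a b))⁻¹ • volume.restrict (Set.Icc a b)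

open Real Finset

lemma uniformLaw_Ici {a b c : ℝ} (hab : a < b) (hac : a ≤ c) :
    uniformLaw a b (Set.Ici c) = ENNReal.ofReal ((b - c) / (b - a)) := by
  have hinter : Set.Ici c ∩ Set.Icc a b = Set.Icc c b := by
    ext x
    simp only [Set.mem_inter_iff, Set.mem_Ici, Set.mem_Icc]
    exact ⟨fun ⟨h, _, h'⟩ => ⟨h, h'⟩, fun ⟨h, h'⟩ => ⟨h, hac.trans h, h'⟩⟩
  rw [uniformLaw, Measure.smul_apply, Measure.restrict_apply measurableSet_Ici, hinter,
    Real.volume_Icc, Real.volume_Icc, smul_eq_mul, ENNReal.ofReal_div_of_pos (sub_pos.2 hab),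
    ENNReal.div_eq_inv_mul]

section

variable {Ω ι : Type*} [MeasurableSpace Ω] {μ : Measure Ω}

lemma measureReal_setOf_le_of_map_eq_uniformLaw {X : Ω → ℝ} (hX : Measurable X) {a b c : ℝ}
    (hlaw : μ.map X = uniformLaw a b) (hab : a < b) (hac : a ≤ c) (hcb : c ≤ b) :
    μ.real {ω | c ≤ X ω} = (b - c) / (b - a) := by
  rw [measureReal_def, show {ω | c ≤ X ω} = X ⁻¹' Set.Ici c from rfl,
    ← Measure.map_apply hX measurableSet_Ici, hlaw, uniformLaw_Ici hab hac,
    ENNReal.toReal_ofReal (div_nonneg (sub_nonneg.2 hcb) (sub_pos.2 hab).le)]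

lemma ProbabilityTheory.iIndepFun.iIndepSet_preimage {β : Type*} [MeasurableSpace β]
    {X : ι → Ω → β} (h : iIndepFun X μ) (hX : ∀ i, Measurable (X i)) {s : ι → Set β}
    (hs : ∀ i, MeasurableSet (s i)) : iIndepSet (fun i => X i ⁻¹' s i) μ :=
  (iIndepSet_iff_meas_biInter fun i => hX i (hs i)).2 fun S =>
    iIndepFun_iff_measure_inter_preimage_eq_mul.1 h S fun i _ => hs i

variable [IsProbabilityMeasure μ]

lemma mgf_indicator_one {A : Set Ω} (hA : MeasurableSet A) (t : ℝ) :
    mgf (A.indicator 1) μ t = 1 + (exp t - 1) * μ.real A := by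
  have hexp : (fun ω => exp (t * A.indicator 1 ω)) =
      fun ω => 1 + (exp t - 1) * A.indicator 1 ω := by
    funext ω
    by_cases hω : ω ∈ A <;> simp [hω]
  rw [mgf, hexp, integral_add (integrable_const 1) ((integrable_indicator_iff hA).2
    (integrable_const 1).integrableOn |>.const_mul _), integral_const, integral_const_mul,
    integral_indicator_one hA]
  simp

lemma measureReal_card_filter_le_half_le {P : ι → Ω → Prop} [∀ i ω, Decidable (P i ω)]
    (hP : ∀ i, MeasurableSet {ω | P i ω}) (hindep : iIndepSet (fun i => {ω | P i ω}) μ)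
    (L : Finset ι) {p : ℝ} (hp0 : 0 ≤ p) (hp : ∀ i ∈ L, p ≤ μ.real {ω | P i ω}) :
    μ.real {ω | (#{i ∈ L | P i ω} : ℝ) ≤ p * #L / 2} ≤ exp (-(p * #L) / 8) := by
  set S : Ω → ℝ := ∑ i ∈ L, {ω | P i ω}.indicator 1
  have hS : ∀ ω, S ω = #{i ∈ L | P i ω} := fun ω => by
    simp only [S, Finset.sum_apply, natCast_card_filter, Set.indicator_apply, Set.mem_ofPred_eq,
      Pi.one_apply]
  have hS_meas : Measurable S := by
    simpa only [← Finset.sum_fn] using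
      Finset.measurable_sum L fun i _ => measurable_one.indicator (hP i)
  have hint : Integrable (fun ω => exp (-log 2 * S ω)) μ := by
    refine .of_bound (by fun_prop) 1 (ae_of_all _ fun ω => ?_)
    rw [norm_of_nonneg (exp_pos _).le, exp_le_one_iff, hS]
    exact mul_nonpos_of_nonpos_of_nonneg (neg_nonpos.2 (log_nonneg one_le_two)) (Nat.cast_nonneg _)
  -- the factor is `1 - μ {P i} / 2 ≤ 1 - p / 2 ≤ exp (-p / 2)`
  have hfactor : ∀ i ∈ L, mgf ({ω | P i ω}.indicator 1) μ (-log 2) ≤ exp (-p / 2) := by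
    intro i hi
    rw [mgf_indicator_one (hP i), exp_neg, exp_log two_pos]
    linarith [add_one_le_exp (-p / 2), hp i hi]
  have hmgf : mgf S μ (-log 2) ≤ exp (-(p * #L) / 2) := calc
    mgf S μ (-log 2) = ∏ i ∈ L, mgf ({ω | P i ω}.indicator 1) μ (-log 2) :=
      hindep.iIndepFun_indicator.mgf_sum (fun i => measurable_one.indicator (hP i)) L
    _ ≤ ∏ _i ∈ L, exp (-p / 2) := Finset.prod_le_prod (fun _ _ => mgf_nonneg) hfactor
    _ = exp (-(p * #L) / 2) := by rw [Finset.prod_const, ← exp_nat_mul]; ring_nf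
  have hlog2 : log 2 ≤ 3 / 4 := by linarith [log_two_lt_d9]
  simp_rw [← hS]
  calc μ.real {ω | S ω ≤ p * #L / 2}
      ≤ exp (log 2 * (p * #L / 2)) * mgf S μ (-log 2) := by
        simpa using measure_le_le_exp_mul_mgf _ (neg_nonpos.2 (log_nonneg one_le_two)) hint
    _ ≤ exp (log 2 * (p * #L / 2)) * exp (-(p * #L) / 2) := by gcongr
    _ ≤ exp (-(p * #L) / 8) := by
        rw [← exp_add, exp_le_exp]
        nlinarith [mul_nonneg hp0 (Nat.cast_nonneg (α := ℝ) #L)]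

lemma one_sub_exp_le_measureReal_half_le_card_filter {P : ι → Ω → Prop}
    [∀ i ω, Decidable (P i ω)] (hP : ∀ i, MeasurableSet {ω | P i ω})
    (hindep : iIndepSet (fun i => {ω | P i ω}) μ) (L : Finset ι) {p : ℝ} (hp0 : 0 ≤ p)
    (hp : ∀ i ∈ L, p ≤ μ.real {ω | P i ω}) :
    1 - exp (-(p * #L) / 8) ≤ μ.real {ω | p * #L / 2 ≤ (#{i ∈ L | P i ω} : ℝ)} := by
  set s := {ω | p * #L / 2 ≤ (#{i ∈ L | P i ω} : ℝ)}
  have hsub : sᶜ ⊆ {ω | (#{i ∈ L | P i ω} : ℝ) ≤ p * #L / 2} := by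
    rw [Set.compl_ofPred]; exact fun _ hω => (not_le.1 hω).le
  have hcompl : μ.real sᶜ ≤ exp (-(p * #L) / 8) :=
    (measureReal_mono hsub).trans (measureReal_card_filter_le_half_le hP hindep L hp0 hp)
  have hunion : μ.real (s ∪ sᶜ) ≤ μ.real s + μ.real sᶜ := measureReal_union_le s sᶜ
  rw [Set.union_compl_self, probReal_univ] at hunion
  linarith

end

theorem stmt_2_general {Ω : Type*} [MeasurableSpace Ω] (μ : Measure Ω) [IsProbabilityMeasure μ]
    {ι : Type*} (L : Finset ι)
    (D ε γ : ℝ) (hε : 0 < ε) (hγ1 : 1 < γ)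
    (d : ι → ℝ) (hd1 : ∀ e ∈ L, D + γ * ε - 1 ≤ d e)
    (X : ι → Ω → ℝ) (hX : ∀ e, Measurable (X e))
    (hindep : iIndepFun X μ)
    (hlaw : ∀ e ∈ L, Measure.map (X e) μ = uniformLaw D (d e + 1))
    (n : ℕ) (hn : 1 ≤ n)
    (hL : 8 * Real.log n ≤ (1 - 1 / γ) * L.card) :
    1 - 1 / (n : ℝ) ≤
      (μ {ω | (1 / 2) * (1 - 1 / γ) * L.card ≤
        ((L.filter fun e => D + ε ≤ X e ω).card : ℝ)}).toReal := by
  have hγ0 : 0 < γ := one_pos.trans hγ1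
  have hq : 0 ≤ 1 - 1 / γ := sub_nonneg.2 ((div_le_one hγ0).2 hγ1.le)
  have htail : ∀ e ∈ L, 1 - 1 / γ ≤ μ.real {ω | D + ε ≤ X e ω} := by
    intro e he
    have hγε : γ * ε ≤ d e + 1 - D := by linarith [hd1 e he]
    have hεγε : ε < γ * ε := lt_mul_of_one_lt_left hε hγ1
    rw [measureReal_setOf_le_of_map_eq_uniformLaw (hX e) (hlaw e he) (by linarith) (by linarith)
      (by linarith), le_div_iff₀ (by linarith)]
    have hε_le : ε ≤ (d e + 1 - D) / γ := (le_div_iff₀ hγ0).2 (by linarith)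
    linarith [show (1 - 1 / γ) * (d e + 1 - D) = d e + 1 - D - (d e + 1 - D) / γ by ring, hε_le]
  have hexp : exp (-((1 - 1 / γ) * L.card) / 8) ≤ 1 / n := calc
    exp (-((1 - 1 / γ) * L.card) / 8) ≤ exp (-log n) := exp_le_exp.2 (by linarith)
    _ = 1 / n := by rw [exp_neg, exp_log (Nat.cast_pos.2 hn), one_div]
  rw [show 1 / 2 * (1 - 1 / γ) * (L.card : ℝ) = (1 - 1 / γ) * L.card / 2 by ring]
  exact (sub_le_sub_left hexp 1).trans (one_sub_exp_le_measureReal_half_le_card_filter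
    (fun e => hX e measurableSet_Ici) (hindep.iIndepSet_preimage hX fun _ => measurableSet_Ici)
    L hq htail)

theorem stmt_2 {Ω : Type*} [MeasurableSpace Ω] (μ : Measure Ω) [IsProbabilityMeasure μ]
    {ι : Type*} [DecidableEq ι] (L : Finset ι)
    (D ε γ : ℝ) (hD : 0 ≤ D) (hε : 0 < ε) (hγ1 : 1 < γ) (hγ2 : γ ≤ 1 / ε)
    (d : ι → ℝ) (hd1 : ∀ e ∈ L, D + γ * ε - 1 ≤ d e) (hd2 : ∀ e ∈ L, d e ≤ D)
    (X : ι → Ω → ℝ) (hX : ∀ e, Measurable (X e))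
    (hindep : iIndepFun X μ)
    (hlaw : ∀ e ∈ L, Measure.map (X e) μ = uniformLaw D (d e + 1))
    (n : ℕ) (hn : 1 ≤ n)
    (hL : 8 * Real.log n ≤ (1 - 1 / γ) * L.card) :
    1 - 1 / (n : ℝ) ≤
      (μ {ω | (1 / 2) * (1 - 1 / γ) * L.card ≤
        ((L.filter fun e => D + ε ≤ X e ω).card : ℝ)}).toReal :=
  stmt_2_general μ L D ε γ hε hγ1 d hd1 X hX hindep hlaw n hn hL
end

section
/- For every real number q with 0 < q ≤ 1, every real number γ with γ ≥ 1, and every integer l ≥ 1, one has ∑_{i=1}^{l} ∑_{k=0}^{i−1} binom(i−1, k) · q^k · (1 − q)^{i−1−k} · (1/(k+1)) · ( 1 − (1 − 1/γ)^{k+1} ) = ∑_{i=1}^{l} (1/(i·q)) · ( 1 − (1 − q/γ)^{i} ). -/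
/-!
Each inner sum is the expectation of `(1 - a ^ (K + 1)) / (K + 1)` for `K ~ Bin(i - 1, q)`, with
`a = 1 - 1/γ`. Since `binom(n, k) / (k + 1) = binom(n + 1, k + 1) / (n + 1)`, the sum
`∑ binom(n, k) x^(k+1) y^(n-k) / (k+1)` is `((x + y)^(n+1) - y^(n+1)) / (n + 1)` by the binomial
theorem; taking `x = q` and `x = q a` with `y = 1 - q`, the inner sum collapses to
`(1 - (1 - q/γ)^i) / (i q)`, term by term in `i`.
-/

open Finset

theorem add_pow_succ_sub_pow_succ {R : Type*} [CommRing R] (x y : R) (n : ℕ) :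
    (x + y) ^ (n + 1) - y ^ (n + 1) =
      ∑ k ∈ range (n + 1), ((n + 1).choose (k + 1) : R) * x ^ (k + 1) * y ^ (n - k) := by
  rw [add_pow, sum_range_succ']
  simp only [Nat.choose_zero_right, Nat.cast_one, pow_zero, one_mul, mul_one, Nat.sub_zero,
    Nat.add_sub_add_right, add_sub_cancel_right]
  exact sum_congr rfl fun k _ => by ring

theorem sum_range_choose_mul_pow_succ_div {K : Type*} [Field K] [CharZero K] (x y : K) (n : ℕ) :
    ∑ k ∈ range (n + 1), (n.choose k : K) * x ^ (k + 1) * y ^ (n - k) / (k + 1) =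
      ((x + y) ^ (n + 1) - y ^ (n + 1)) / (n + 1) := by
  rw [eq_div_iff (Nat.cast_add_one_ne_zero n), sum_mul, add_pow_succ_sub_pow_succ]
  refine sum_congr rfl fun k _ => ?_
  have hchoose : ((n + 1).choose (k + 1) : K) * (k + 1) = (n + 1) * n.choose k := by
    exact_mod_cast (Nat.add_one_mul_choose_eq n k).symm
  rw [div_mul_eq_mul_div, div_eq_iff (Nat.cast_add_one_ne_zero k)]
  linear_combination -(x ^ (k + 1) * y ^ (n - k)) * hchoose

theorem sum_range_binomial_mul_one_sub_pow_succ_div {K : Type*} [Field K] [CharZero K]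
    {q : K} (hq : q ≠ 0) (a : K) (n : ℕ) :
    ∑ k ∈ range (n + 1), (n.choose k : K) * q ^ k * (1 - q) ^ (n - k) * (1 / (k + 1)) *
        (1 - a ^ (k + 1)) =
      1 / ((n + 1) * q) * (1 - (1 - q + q * a) ^ (n + 1)) := by
  have hsplit : ∀ k ∈ range (n + 1),
      (n.choose k : K) * q ^ k * (1 - q) ^ (n - k) * (1 / (k + 1)) * (1 - a ^ (k + 1)) =
        q⁻¹ * ((n.choose k : K) * q ^ (k + 1) * (1 - q) ^ (n - k) / (k + 1) -
          (n.choose k : K) * (q * a) ^ (k + 1) * (1 - q) ^ (n - k) / (k + 1)) := by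
    intro k _
    field_simp
    ring
  rw [sum_congr rfl hsplit, ← mul_sum, sum_sub_distrib, sum_range_choose_mul_pow_succ_div,
    sum_range_choose_mul_pow_succ_div]
  field_simp
  ring

theorem stmt_8_general (q : ℝ) (hq0 : 0 < q) (γ : ℝ)
    (l : ℕ) :
    ∑ i ∈ Finset.Icc 1 l, ∑ k ∈ Finset.range i,
        ((i - 1).choose k : ℝ) * q ^ k * (1 - q) ^ (i - 1 - k) * (1 / (k + 1)) *
          (1 - (1 - 1 / γ) ^ (k + 1)) =
      ∑ i ∈ Finset.Icc 1 l, (1 / (i * q)) * (1 - (1 - q / γ) ^ i) := by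
  refine sum_congr rfl fun i hi => ?_
  obtain ⟨n, rfl⟩ : ∃ n, i = n + 1 := ⟨i - 1, by grind⟩
  have h := sum_range_binomial_mul_one_sub_pow_succ_div hq0.ne' (1 - 1 / γ) n
  rw [show 1 - q + q * (1 - 1 / γ) = 1 - q / γ by ring] at h
  simpa using h

theorem stmt_8 (q : ℝ) (hq0 : 0 < q) (hq1 : q ≤ 1) (γ : ℝ) (hγ : 1 ≤ γ)
    (l : ℕ) (hl : 1 ≤ l) :
    ∑ i ∈ Finset.Icc 1 l, ∑ k ∈ Finset.range i,
        ((i - 1).choose k : ℝ) * q ^ k * (1 - q) ^ (i - 1 - k) * (1 / (k + 1)) *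
          (1 - (1 - 1 / γ) ^ (k + 1)) =
      ∑ i ∈ Finset.Icc 1 l, (1 / (i * q)) * (1 - (1 - q / γ) ^ i) :=
  stmt_8_general q hq0 γ l
end

section
/- For every real number q with 0 < q ≤ 1, every real number γ with γ ≥ 1, and all integers i0, l with 1 ≤ i0 ≤ l, one has ∑_{i=1}^{l} (1/(i·q)) · ( 1 − (1 − q/γ)^{i} ) ≤ i0/γ + (1/q) · ∑_{i=i0}^{l} 1/i. -/
/-!
Write `x = q / γ ∈ [0, 1]`, so that the `i`-th summand is `(1 / q) · (1 - (1 - x) ^ i) / i`.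
By Bernoulli's inequality `(1 - (1 - x) ^ i) / i ≤ x`, which bounds the first `i0` summands by
`x / q = 1 / γ` each; trivially `(1 - (1 - x) ^ i) / i ≤ 1 / i`, which bounds the remaining ones.
-/

open Finset

section OneSubPow

variable {x : ℝ}

theorem one_sub_one_sub_pow_div_nonneg (hx0 : 0 ≤ x) (hx1 : x ≤ 1) (n : ℕ) :
    0 ≤ (1 - (1 - x) ^ n) / n :=
  div_nonneg (sub_nonneg.mpr (pow_le_one₀ (by linarith) (by linarith))) n.cast_nonneg

theorem one_sub_one_sub_pow_div_le (hx0 : 0 ≤ x) (hx2 : x ≤ 2) (n : ℕ) :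
    (1 - (1 - x) ^ n) / n ≤ x := by
  rcases n.eq_zero_or_pos with rfl | hn
  · simpa using hx0
  have bernoulli : 1 + n * (-x) ≤ (1 + -x) ^ n := one_add_mul_le_pow (by linarith) n
  rw [div_le_iff₀ (by exact_mod_cast hn)]
  rw [← sub_eq_add_neg] at bernoulli
  linarith

theorem one_sub_one_sub_pow_div_le_one_div (hx1 : x ≤ 1) (n : ℕ) :
    (1 - (1 - x) ^ n) / n ≤ 1 / n :=
  div_le_div_of_nonneg_right (by linarith [pow_nonneg (sub_nonneg.mpr hx1) n]) n.cast_nonneg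

end OneSubPow

theorem sum_Icc_le_mul_add_sum_Icc {g h : ℕ → ℝ} {c : ℝ} (hg : ∀ i, 0 ≤ g i)
    (hgc : ∀ i, g i ≤ c) (hgh : ∀ i, g i ≤ h i) (m k l : ℕ) :
    ∑ i ∈ Icc k l, g i ≤ m * c + ∑ i ∈ Icc m l, h i := by
  rw [← sum_filter_add_sum_filter_not (Icc k l) (· < m)]
  have hc : 0 ≤ c := (hg 0).trans (hgc 0)
  have head : ∑ i ∈ (Icc k l).filter (· < m), g i ≤ m * c :=
    calc ∑ i ∈ (Icc k l).filter (· < m), g i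
        ≤ #((Icc k l).filter (· < m)) • c := sum_le_card_nsmul _ _ _ fun i _ ↦ hgc i
      _ ≤ m * c := by
        rw [nsmul_eq_mul]
        gcongr
        exact_mod_cast (card_le_card fun i hi ↦ by simpa using (mem_filter.mp hi).2).trans
          (card_range m).le
  have tail : ∑ i ∈ (Icc k l).filter (¬ · < m), g i ≤ ∑ i ∈ Icc m l, h i :=
    calc ∑ i ∈ (Icc k l).filter (¬ · < m), g i ≤ ∑ i ∈ Icc m l, g i := by
          refine sum_le_sum_of_subset_of_nonneg (fun i hi ↦ ?_) fun i _ _ ↦ hg i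
          simp only [mem_filter, mem_Icc, not_lt] at hi ⊢
          omega
      _ ≤ ∑ i ∈ Icc m l, h i := sum_le_sum fun i _ ↦ hgh i
  linarith

theorem stmt_9_general (q : ℝ) (hq0 : 0 < q) (hq1 : q ≤ 1) (γ : ℝ) (hγ : 1 ≤ γ)
    (i0 l : ℕ) :
    ∑ i ∈ Finset.Icc 1 l, (1 / (i * q)) * (1 - (1 - q / γ) ^ i) ≤
      i0 / γ + (1 / q) * ∑ i ∈ Finset.Icc i0 l, (1 / (i : ℝ)) := by
  have hγ0 : 0 < γ := one_pos.trans_le hγ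
  have hx0 : 0 ≤ q / γ := by positivity
  have hx1 : q / γ ≤ 1 := (div_le_one hγ0).mpr (hq1.trans hγ)
  have split := sum_Icc_le_mul_add_sum_Icc (one_sub_one_sub_pow_div_nonneg hx0 hx1)
    (one_sub_one_sub_pow_div_le hx0 (by linarith)) (one_sub_one_sub_pow_div_le_one_div hx1) i0 1 l
  calc ∑ i ∈ Icc 1 l, (1 / (i * q)) * (1 - (1 - q / γ) ^ i)
      = (1 / q) * ∑ i ∈ Icc 1 l, (1 - (1 - q / γ) ^ i) / i := by
        rw [mul_sum]
        exact sum_congr rfl fun i _ ↦ by ring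
    _ ≤ (1 / q) * (i0 * (q / γ) + ∑ i ∈ Icc i0 l, (1 / (i : ℝ))) := by gcongr
    _ = i0 / γ + (1 / q) * ∑ i ∈ Icc i0 l, (1 / (i : ℝ)) := by
        field_simp

theorem stmt_9 (q : ℝ) (hq0 : 0 < q) (hq1 : q ≤ 1) (γ : ℝ) (hγ : 1 ≤ γ)
    (i0 l : ℕ) (hi0 : 1 ≤ i0) (hil : i0 ≤ l) :
    ∑ i ∈ Finset.Icc 1 l, (1 / (i * q)) * (1 - (1 - q / γ) ^ i) ≤
      i0 / γ + (1 / q) * ∑ i ∈ Finset.Icc i0 l, (1 / (i : ℝ)) :=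
  stmt_9_general q hq0 hq1 γ hγ i0 l
end
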